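/- arXiv:2206.08797 — 2 statements merged into one kernel-verified Lean document; each statement's English description precedes it below -/
import Mathlib

section
/- Let n ≥ 1 and let Y be an n×n complex Hermitian matrix whose largest eigenvalue δ has multiplicity one (exactly one eigenvalue, counted with multiplicity, equals δ). Let λ be a real number with λ ≥ δ and set X = λ·I − Y. If W is an n×n complex positive semidefinite Hermitian matrix satisfying X·W = 0, then rank(W) ≤ 1. -/
open Matrix ComplexOrder

/-!
Diagonalising `Y = U D Uᴴ`, the matrix `λ • 1 - Y = U (λ - D) Uᴴ` has rank equal to the number
of eigenvalues of `Y` different from `λ`. Since `λ ≥ δ ≥` every eigenvalue, an eigenvalue equal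
to `λ` must equal `δ`, so at most one eigenvalue equals `λ` and `rank X ≥ n - 1`.
Then `X * W = 0` forces `rank X + rank W ≤ n`, hence `rank W ≤ 1`.
-/

namespace Matrix.IsHermitian

variable {𝕜 n : Type*} [RCLike 𝕜] [Fintype n] [DecidableEq n] {A : Matrix n n 𝕜}

lemma rank_smul_one_sub (hA : A.IsHermitian) (c : ℝ) :
    (c • 1 - A).rank = Fintype.card {i // hA.eigenvalues i ≠ c} := by
  have hdiag : c • 1 - A = Unitary.conjStarAlgAut 𝕜 _ hA.eigenvectorUnitary
      (diagonal fun i => ((c - hA.eigenvalues i : ℝ) : 𝕜)) := by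
    conv_lhs => rw [hA.spectral_theorem, RCLike.real_smul_eq_coe_smul (K := 𝕜),
      ← map_one (Unitary.conjStarAlgAut 𝕜 _ hA.eigenvectorUnitary), ← map_smul, ← map_sub,
      smul_one_eq_diagonal, diagonal_sub]
    simp
  rw [hdiag, Unitary.conjStarAlgAut_apply, ← Unitary.coe_star,
    rank_mul_eq_left_of_isUnit_det _ _ (UnitaryGroup.det_isUnit _),
    rank_mul_eq_right_of_isUnit_det _ _ (UnitaryGroup.det_isUnit _), rank_diagonal]
  exact Fintype.card_congr <| Equiv.subtypeEquivRight fun i =>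
    (RCLike.ofReal_ne_zero.trans sub_ne_zero).trans ne_comm

end Matrix.IsHermitian

theorem stmt0_general {n : ℕ} (Y : Matrix (Fin n) (Fin n) ℂ)
    (hY : Y.IsHermitian) (δ : ℝ)
    (hδmax : ∀ i, hY.eigenvalues i ≤ δ)
    (hδsimple : ∃! i, hY.eigenvalues i = δ)
    (lam : ℝ) (hlam : δ ≤ lam)
    (X : Matrix (Fin n) (Fin n) ℂ)
    (hX : X = lam • (1 : Matrix (Fin n) (Fin n) ℂ) - Y)
    (W : Matrix (Fin n) (Fin n) ℂ)
    (hXW : X * W = 0) :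
    W.rank ≤ 1 := by
  have hcard : Fintype.card {i // hY.eigenvalues i = lam} ≤ 1 := by
    obtain ⟨k, -, hk⟩ := hδsimple
    have hδ : ∀ i, hY.eigenvalues i = lam → i = k := fun i hi =>
      hk i (le_antisymm (hδmax i) (hi ▸ hlam))
    exact Fintype.card_le_one_iff.mpr fun i j => Subtype.ext ((hδ i i.2).trans (hδ j j.2).symm)
  have hrankX : X.rank = n - Fintype.card {i // hY.eigenvalues i = lam} := by
    rw [hX, hY.rank_smul_one_sub, Fintype.card_subtype_compl, Fintype.card_fin]
  have hsum := rank_add_rank_le_card_of_mul_eq_zero hXW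
  rw [Fintype.card_fin] at hsum
  omega

/-- Let `n ≥ 1` and let `Y` be an `n × n` complex Hermitian matrix whose
largest eigenvalue `δ` has multiplicity one (exactly one eigenvalue, counted with
multiplicity, equals `δ`).  Let `λ ≥ δ` and set `X = λ • I - Y`.  If `W` is positive
semidefinite and `X * W = 0`, then `rank W ≤ 1`. -/
theorem stmt0 {n : ℕ} (hn : 1 ≤ n) (Y : Matrix (Fin n) (Fin n) ℂ)
    (hY : Y.IsHermitian) (δ : ℝ)
    (hδmax : ∀ i, hY.eigenvalues i ≤ δ)
    (hδsimple : ∃! i, hY.eigenvalues i = δ)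
    (lam : ℝ) (hlam : δ ≤ lam)
    (X : Matrix (Fin n) (Fin n) ℂ)
    (hX : X = lam • (1 : Matrix (Fin n) (Fin n) ℂ) - Y)
    (W : Matrix (Fin n) (Fin n) ℂ) (hW : W.PosSemidef)
    (hXW : X * W = 0) :
    W.rank ≤ 1 :=
  stmt0_general Y hY δ hδmax hδsimple lam hlam X hX W hXW
end

section
/- Let S be a nonempty set, F, G : S → ℝ with F − G bounded above on S, and for each x ∈ S let Ĝ(·, x) : S → ℝ satisfy Ĝ(y, x) ≥ G(y) for all y ∈ S and Ĝ(x, x) = G(x). Let (xₙ) be a sequence in S such that for every n, xₙ₊₁ maximizes y ↦ F(y) − Ĝ(y, xₙ) over S. Then the real sequence (F(xₙ) − G(xₙ)) is nondecreasing and converges. -/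
/-! Minorize–maximize: since `Ĝ(·, xₙ)` majorizes `G` and touches it at `xₙ`,
`F(xₙ) - G(xₙ) = F(xₙ) - Ĝ(xₙ, xₙ) ≤ F(xₙ₊₁) - Ĝ(xₙ₊₁, xₙ) ≤ F(xₙ₊₁) - G(xₙ₊₁)`.
A nondecreasing real sequence bounded above by `sup (F - G)` converges to its supremum. -/

theorem sub_le_sub_of_majorant_step {S : Type*} {F G Gx : S → ℝ} {x x' : S}
    (hub : ∀ y, G y ≤ Gx y) (htight : Gx x = G x) (hstep : F x - Gx x ≤ F x' - Gx x') :
    F x - G x ≤ F x' - G x' := by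
  linarith [hub x']

theorem monotone_of_majorize_maximize {S : Type*} {F G : S → ℝ} {Ghat : S → S → ℝ}
    (hub : ∀ x y, G y ≤ Ghat y x) (htight : ∀ x, Ghat x x = G x) {x : ℕ → S}
    (hmax : ∀ n, ∀ y, F y - Ghat y (x n) ≤ F (x (n + 1)) - Ghat (x (n + 1)) (x n)) :
    Monotone (fun m => F (x m) - G (x m)) :=
  monotone_nat_of_le_succ fun n =>
    sub_le_sub_of_majorant_step (hub (x n)) (htight (x n)) (hmax n (x n))

theorem stmt12_general {S : Type*} (F G : S → ℝ) (Ghat : S → S → ℝ)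
    (hbdd : BddAbove (Set.range fun y => F y - G y))
    (hub : ∀ x y, G y ≤ Ghat y x) (htight : ∀ x, Ghat x x = G x)
    (x : ℕ → S)
    (hmax : ∀ n, ∀ y, F y - Ghat y (x n) ≤ F (x (n + 1)) - Ghat (x (n + 1)) (x n)) :
    Monotone (fun m => F (x m) - G (x m)) ∧
      ∃ l : ℝ, Filter.Tendsto (fun m => F (x m) - G (x m)) Filter.atTop (nhds l) := by
  have hmono := monotone_of_majorize_maximize hub htight hmax
  have hbdd_seq : BddAbove (Set.range fun m => F (x m) - G (x m)) :=
    hbdd.mono (Set.range_comp_subset_range x fun y => F y - G y)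
  exact ⟨hmono, _, tendsto_atTop_ciSup hmono hbdd_seq⟩

/-- With a surrogate `Ĝ` that is a tight global upper bound of `G`, if
`F - G` is bounded above and each `xₙ₊₁` maximizes `y ↦ F(y) - Ĝ(y, xₙ)`, then the sequence
`F(xₙ) - G(xₙ)` is nondecreasing and converges. -/
theorem stmt12 {S : Type*} [Nonempty S] (F G : S → ℝ) (Ghat : S → S → ℝ)
    (hbdd : BddAbove (Set.range fun y => F y - G y))
    (hub : ∀ x y, G y ≤ Ghat y x) (htight : ∀ x, Ghat x x = G x)
    (x : ℕ → S)
    (hmax : ∀ n, ∀ y, F y - Ghat y (x n) ≤ F (x (n + 1)) - Ghat (x (n + 1)) (x n)) :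
    Monotone (fun m => F (x m) - G (x m)) ∧
      ∃ l : ℝ, Filter.Tendsto (fun m => F (x m) - G (x m)) Filter.atTop (nhds l) :=
  stmt12_general F G Ghat hbdd hub htight x hmax
end
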